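/- Let F be a Banach lattice, X a Banach space, 1 < p ≤ ∞. Suppose T : X → F satisfies the domination: there exist C > 0 and a probability measure μ on B_{F**}⁺ such that |⟨T(x), y*⟩| ≤ C ‖x‖ (∫_{B_{F**}⁺} ⟨|y*|, ψ⟩^{p*} dμ(ψ))^{1/p*} for all x ∈ X and y* ∈ F*. Then T is positive strongly p-summing with d_p⁺(T) ≤ C: for all finite families (x_i) ⊂ X and (y_i*) ⊂ F*⁺, Σ_i |⟨T(x_i), y_i*⟩| ≤ C (Σ_i ‖x_i‖^p)^{1/p} ‖(y_i*)‖_{w,p*}. -/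

import Mathlib

/-!
Testing the domination against a positive `y_i*`, for which `|y_i*| = y_i*`, gives
`|⟨T x_i, y_i*⟩| ≤ C ‖x_i‖ a_i` with `a_i = (∫ ⟨ψ, y_i*⟩^{p*} dμ)^{1/p*}`. Hölder's inequality
bounds `∑ ‖x_i‖ a_i` by `(∑ ‖x_i‖^p)^{1/p} (∑ a_i^{p*})^{1/p*}`, and
`∑ a_i^{p*} = ∫ ∑_i ⟨ψ, y_i*⟩^{p*} dμ(ψ) ≤ ‖(y_i*)‖_{w,p*}^{p*}`, because every `ψ ∈ B_{F**}⁺`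
is one of the functionals in the supremum defining the weak norm and `μ` is a probability measure.
-/

open MeasureTheory

/-- The positive part of the bidual unit ball of a Banach lattice `F`, with the
weak-* topology. -/
def PosBidualBall (F : Type*) [NormedAddCommGroup F] [Lattice F] [HasSolidNorm F] [IsOrderedAddMonoid F] [NormedSpace ℝ F] : Type _ :=
  {ψ : WeakDual ℝ (F →L[ℝ] ℝ) // (∀ φ : F →L[ℝ] ℝ, |ψ φ| ≤ ‖φ‖) ∧
    ∀ φ : F →L[ℝ] ℝ, (∀ y, 0 ≤ y → 0 ≤ φ y) → 0 ≤ ψ φ}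

instance (F : Type*) [NormedAddCommGroup F] [Lattice F] [HasSolidNorm F] [IsOrderedAddMonoid F] [NormedSpace ℝ F] :
    TopologicalSpace (PosBidualBall F) :=
  inferInstanceAs (TopologicalSpace (Subtype _))

noncomputable instance (F : Type*) [NormedAddCommGroup F] [Lattice F] [HasSolidNorm F] [IsOrderedAddMonoid F] [NormedSpace ℝ F] :
    MeasurableSpace (PosBidualBall F) := borel _

instance (F : Type*) [NormedAddCommGroup F] [Lattice F] [HasSolidNorm F] [IsOrderedAddMonoid F] [NormedSpace ℝ F] :
    BorelSpace (PosBidualBall F) := ⟨rfl⟩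

theorem DFunLike.ext_of_nonneg {E M H : Type*} [Lattice E] [AddCommGroup E] [IsOrderedAddMonoid E]
    [AddGroup M] [FunLike H E M] [AddMonoidHomClass H E M] {f g : H}
    (h : ∀ y, 0 ≤ y → f y = g y) : f = g :=
  DFunLike.ext f g fun y => by
    rw [← posPart_sub_negPart y, map_sub, map_sub, h _ (posPart_nonneg y), h _ (negPart_nonneg y)]

theorem MeasureTheory.sum_integral_le_of_forall_sum_le {Ω ι : Type*} [MeasurableSpace Ω]
    {μ : Measure Ω} [IsProbabilityMeasure μ] {s : Finset ι} {f : ι → Ω → ℝ} {c : ℝ}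
    (hf : ∀ i ∈ s, Integrable (f i) μ) (h : ∀ ω, ∑ i ∈ s, f i ω ≤ c) :
    ∑ i ∈ s, ∫ ω, f i ω ∂μ ≤ c := by
  rw [← integral_finsetSum s hf]
  simpa using integral_mono (integrable_finsetSum s hf) (integrable_const c) h

section DualAbs

variable {F : Type*} [NormedAddCommGroup F] [Lattice F] [IsOrderedAddMonoid F] [NormedSpace ℝ F]

def IsDualAbs (φ a : F →L[ℝ] ℝ) : Prop :=
  (∀ y : F, 0 ≤ y → φ y ≤ a y ∧ -φ y ≤ a y) ∧
    ∀ χ : F →L[ℝ] ℝ, (∀ y : F, 0 ≤ y → φ y ≤ χ y ∧ -φ y ≤ χ y) → ∀ y : F, 0 ≤ y → a y ≤ χ y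

theorem IsDualAbs.eq_self_of_nonneg {φ a : F →L[ℝ] ℝ} (ha : IsDualAbs φ a)
    (hφ : ∀ y, 0 ≤ y → 0 ≤ φ y) : a = φ :=
  DFunLike.ext_of_nonneg fun y hy =>
    le_antisymm (ha.2 φ (fun z hz => ⟨le_rfl, by linarith [hφ z hz]⟩) y hy) (ha.1 y hy).1

end DualAbs

section WeakLpNorm

variable {E ι : Type*} [NormedAddCommGroup E] [NormedSpace ℝ E] [Fintype ι]

/-- The weak `ℓ^q` norm `‖(y_i)‖_{w,q}`. -/
noncomputable def weakLpNorm (q : ℝ) (y : ι → E) : ℝ :=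
  sSup {s : ℝ | ∃ ψ : E →L[ℝ] ℝ, ‖ψ‖ ≤ 1 ∧ s = (∑ i, |ψ (y i)| ^ q) ^ (1 / q)}

theorem bddAbove_weakLpNorm_set {q : ℝ} (hq : 0 < q) (y : ι → E) :
    BddAbove {s : ℝ | ∃ ψ : E →L[ℝ] ℝ, ‖ψ‖ ≤ 1 ∧ s = (∑ i, |ψ (y i)| ^ q) ^ (1 / q)} := by
  refine ⟨(∑ i, ‖y i‖ ^ q) ^ (1 / q), ?_⟩
  rintro _ ⟨ψ, hψ, rfl⟩
  gcongr with i
  calc |ψ (y i)| = ‖ψ (y i)‖ := rfl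
    _ ≤ ‖ψ‖ * ‖y i‖ := ψ.le_opNorm _
    _ ≤ ‖y i‖ := mul_le_of_le_one_left (norm_nonneg _) hψ

theorem rpow_sum_le_weakLpNorm {q : ℝ} (hq : 0 < q) (y : ι → E) {ψ : E →L[ℝ] ℝ} (hψ : ‖ψ‖ ≤ 1) :
    (∑ i, |ψ (y i)| ^ q) ^ (1 / q) ≤ weakLpNorm q y :=
  le_csSup (bddAbove_weakLpNorm_set hq y) ⟨ψ, hψ, rfl⟩

theorem weakLpNorm_nonneg {q : ℝ} (hq : 0 < q) (y : ι → E) : 0 ≤ weakLpNorm q y :=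
  (by positivity : (0 : ℝ) ≤ _).trans (rpow_sum_le_weakLpNorm hq y (ψ := 0) (by simp))

theorem sum_rpow_le_weakLpNorm_rpow {q : ℝ} (hq : 0 < q) (y : ι → E) {ψ : E →L[ℝ] ℝ}
    (hψ : ‖ψ‖ ≤ 1) : ∑ i, |ψ (y i)| ^ q ≤ weakLpNorm q y ^ q := by
  have hle := rpow_sum_le_weakLpNorm hq y hψ
  rw [one_div] at hle
  exact (Real.rpow_inv_le_iff_of_pos (by positivity) (weakLpNorm_nonneg hq y) hq).1 hle

end WeakLpNorm

namespace PosBidualBall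

variable {F : Type*} [NormedAddCommGroup F] [Lattice F] [HasSolidNorm F] [IsOrderedAddMonoid F]
  [NormedSpace ℝ F]

theorem norm_toStrongDual_le_one (ψ : PosBidualBall F) : ‖WeakDual.toStrongDual ψ.1‖ ≤ 1 :=
  ContinuousLinearMap.opNorm_le_bound _ zero_le_one fun φ => by
    rw [one_mul]
    exact ψ.2.1 φ

theorem continuous_eval (φ : F →L[ℝ] ℝ) : Continuous fun ψ : PosBidualBall F => ψ.1 φ :=
  (WeakDual.eval_continuous φ).comp continuous_subtype_val

theorem integrable_eval_rpow (μ : Measure (PosBidualBall F)) [IsFiniteMeasure μ]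
    (φ : F →L[ℝ] ℝ) {q : ℝ} (hq : 0 ≤ q) : Integrable (fun ψ : PosBidualBall F => ψ.1 φ ^ q) μ := by
  refine Integrable.mono' (integrable_const (‖φ‖ ^ q))
    ((continuous_eval φ).rpow_const fun _ => Or.inr hq).aestronglyMeasurable
    (Filter.Eventually.of_forall fun ψ => ?_)
  exact (Real.abs_rpow_le_abs_rpow _ _).trans (by gcongr; exact ψ.2.1 φ)

theorem integral_eval_rpow_nonneg (μ : Measure (PosBidualBall F)) {φ : F →L[ℝ] ℝ}
    (hφ : ∀ y, 0 ≤ y → 0 ≤ φ y) (q : ℝ) : 0 ≤ ∫ ψ, ψ.1 φ ^ q ∂μ :=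
  integral_nonneg fun ψ => Real.rpow_nonneg (ψ.2.2 φ hφ) q

theorem rpow_sum_integral_le_weakLpNorm (μ : Measure (PosBidualBall F)) [IsProbabilityMeasure μ]
    {ι : Type*} [Fintype ι] {y : ι → F →L[ℝ] ℝ} (hy : ∀ i, ∀ z, 0 ≤ z → 0 ≤ y i z)
    {q : ℝ} (hq : 0 < q) :
    (∑ i, ((∫ ψ, ψ.1 (y i) ^ q ∂μ) ^ (1 / q)) ^ q) ^ (1 / q) ≤ weakLpNorm q y := by
  have hint : ∀ i, 0 ≤ ∫ ψ, ψ.1 (y i) ^ q ∂μ := fun i => integral_eval_rpow_nonneg μ (hy i) q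
  simp only [one_div, Real.rpow_inv_rpow (hint _) hq.ne']
  rw [Real.rpow_inv_le_iff_of_pos (Finset.sum_nonneg fun i _ => hint i) (weakLpNorm_nonneg hq y) hq]
  refine sum_integral_le_of_forall_sum_le (fun i _ => integrable_eval_rpow μ (y i) hq.le)
    fun ψ => ?_
  simpa only [WeakDual.toStrongDual_apply, abs_of_nonneg (ψ.2.2 _ (hy _))] using
    sum_rpow_le_weakLpNorm_rpow hq y (norm_toStrongDual_le_one ψ)

end PosBidualBall

/-- `aD φ` plays `|φ|`, the modulus of `φ` in the dual lattice, specified as in `IsDualAbs`. -/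
theorem domination_implies_positive_strongly_p_summing
    {X : Type*} [NormedAddCommGroup X] [NormedSpace ℝ X]
    {F : Type*} [NormedAddCommGroup F] [Lattice F] [HasSolidNorm F] [IsOrderedAddMonoid F] [NormedSpace ℝ F]
    (p pstar : ℝ) (hp : 1 < p) (hconj : 1 / p + 1 / pstar = 1)
    (aD : (F →L[ℝ] ℝ) → (F →L[ℝ] ℝ))
    (haD : ∀ φ : F →L[ℝ] ℝ,
      (∀ y : F, 0 ≤ y → φ y ≤ aD φ y ∧ -φ y ≤ aD φ y) ∧
      ∀ χ : F →L[ℝ] ℝ, (∀ y : F, 0 ≤ y → φ y ≤ χ y ∧ -φ y ≤ χ y) →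
        ∀ y : F, 0 ≤ y → aD φ y ≤ χ y)
    (T : X →L[ℝ] F) (C : ℝ) (hC : 0 < C)
    (μ : Measure (PosBidualBall F)) [IsProbabilityMeasure μ]
    (hdom : ∀ (x : X) (φ : F →L[ℝ] ℝ),
      |φ (T x)| ≤ C * ‖x‖ * (∫ ψ : PosBidualBall F, (ψ.1 (aD φ)) ^ pstar ∂μ) ^ (1 / pstar)) :
    ∀ (n : ℕ) (x : Fin n → X) (y : Fin n → (F →L[ℝ] ℝ)),
      (∀ i, ∀ z, 0 ≤ z → 0 ≤ y i z) →
      ∑ i, |y i (T (x i))| ≤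
        C * (∑ i, ‖x i‖ ^ p) ^ (1 / p) *
          sSup {s : ℝ | ∃ ψ : (F →L[ℝ] ℝ) →L[ℝ] ℝ, ‖ψ‖ ≤ 1 ∧
            s = (∑ i, |ψ (y i)| ^ pstar) ^ (1 / pstar)} := by
  intro n x y hy
  have hpq : p.HolderConjugate pstar :=
    Real.holderConjugate_iff.mpr ⟨hp, by simpa only [one_div] using hconj⟩
  set a : Fin n → ℝ := fun i => (∫ ψ, ψ.1 (y i) ^ pstar ∂μ) ^ (1 / pstar)
  have ha : ∀ i, 0 ≤ a i := fun i =>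
    Real.rpow_nonneg (PosBidualBall.integral_eval_rpow_nonneg μ (hy i) pstar) _
  have hterm : ∀ i, |y i (T (x i))| ≤ C * (‖x i‖ * a i) := fun i => by
    simpa only [IsDualAbs.eq_self_of_nonneg (haD (y i)) (hy i), mul_assoc] using
      hdom (x i) (y i)
  calc ∑ i, |y i (T (x i))| ≤ C * ∑ i, ‖x i‖ * a i := by
        rw [Finset.mul_sum]
        exact Finset.sum_le_sum fun i _ => hterm i
    _ ≤ C * ((∑ i, ‖x i‖ ^ p) ^ (1 / p) * (∑ i, a i ^ pstar) ^ (1 / pstar)) := by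
        gcongr
        exact Real.inner_le_Lp_mul_Lq_of_nonneg _ hpq (fun i _ => norm_nonneg _) fun i _ => ha i
    _ ≤ C * ((∑ i, ‖x i‖ ^ p) ^ (1 / p) * weakLpNorm pstar y) := by
        gcongr
        exact PosBidualBall.rpow_sum_integral_le_weakLpNorm μ hy hpq.symm.pos
    _ = _ := (mul_assoc _ _ _).symm
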